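/- Let n = 2, Σ = diag(σ₁², σ₂²) with σ₁², σ₂² > 0, and C = [[c, d],[d, c]] symmetric positive definite with c > d > 0 (technological substitutes). If β₁ = β₂ = β > 0, then the optimal bonus s₁* = [β(1 + ηcσ₂²) - βηdσ₂²] / det(I + ηCΣ) is strictly decreasing in σ₁². -/
import Mathlib


open Matrix

/-- Technological substitutes (`c > d > 0`), equal marginal benefits `β₁ = β₂ = β > 0`:
the optimal bonus `s₁* = (β(1 + ηcσ₂²) - βηdσ₂²)/det(I + ηCΣ)` is strictly decreasing
in `σ₁²` (for `σ₁², σ₂² > 0`). -/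
theorem substitutes_bonus_decreasing (c d σ2 η β : ℝ) (hd : 0 < d) (hcd : d < c)
    (hσ2 : 0 < σ2) (hη : 0 < η) (hβ : 0 < β)
    (hC : (Matrix.of ![![c, d], ![d, c]]).PosDef) :
    (∀ σ1 : ℝ, 0 < σ1 →
      (β * (1 + η * c * σ2) - β * η * d * σ2) /
          ((1 + η * c * σ1) * (1 + η * c * σ2) - η ^ 2 * d ^ 2 * σ1 * σ2) =
        (β * (1 + η * c * σ2) - β * η * d * σ2) /
          (1 + η • (Matrix.of ![![c, d], ![d, c]] * Matrix.diagonal ![σ1, σ2])).det) ∧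
    StrictAntiOn
      (fun σ1 : ℝ =>
        (β * (1 + η * c * σ2) - β * η * d * σ2) /
          ((1 + η * c * σ1) * (1 + η * c * σ2) - η ^ 2 * d ^ 2 * σ1 * σ2))
      (Set.Ioi 0) := by
  have hc : 0 < c := hd.trans hcd
  -- numerator positive
  have hN : 0 < β * (1 + η * c * σ2) - β * η * d * σ2 := by
    nlinarith [mul_pos (mul_pos (mul_pos hβ hη) hσ2) (sub_pos.mpr hcd)]
  -- denominator as linear function of σ1
  have hA : 0 < η * c * (1 + η * c * σ2) - η ^ 2 * d ^ 2 * σ2 := by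
    nlinarith [mul_pos hη hc,
      mul_pos (mul_pos (mul_pos (mul_pos hη hη) hσ2) (sub_pos.mpr hcd)) (by linarith : (0:ℝ) < c + d)]
  have hden : ∀ σ1 : ℝ, 0 < σ1 →
      0 < (1 + η * c * σ1) * (1 + η * c * σ2) - η ^ 2 * d ^ 2 * σ1 * σ2 := by
    intro σ1 hσ1
    nlinarith [mul_pos (mul_pos hη hc) hσ1, mul_pos (mul_pos hη hc) hσ2,
      mul_pos (mul_pos (mul_pos (mul_pos (mul_pos hη hη) hσ1) hσ2) (sub_pos.mpr hcd)) (by linarith : (0:ℝ) < c + d)]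
  constructor
  · intro σ1 hσ1
    congr 1
    rw [Matrix.det_fin_two]
    simp [Matrix.mul_apply, Fin.sum_univ_two, Matrix.one_apply,
      Matrix.diagonal_apply_eq, Matrix.diagonal_apply_ne, Matrix.diagonal,
      Matrix.vecHead, Matrix.vecTail]
    ring
  · intro x hx y hy hxy
    have hdx := hden x hx
    have hdy := hden y hy
    rw [div_lt_div_iff₀ hdy hdx]
    nlinarith [mul_pos hN hA, sub_pos.mpr hxy]
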